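/- arXiv:2307.11857 — 2 statements merged into one kernel-verified Lean document; each statement's English description precedes it below -/
import Mathlib

section
/- Let g : {0,1}^n → ℝ^n be monotone increasing and u ∈ ℝ̄^n. With e_u^i(x) = E(u[i:=x]) as above, the function e_u^i is constant on the region where its i-th coordinate equals 0: for any x', x'' ∈ ℝ̄ with (e_u^i(x'))_i = 0 and (e_u^i(x''))_i = 0, we have e_u^i(x') = e_u^i(x''). -/
/-!
Raising agent `i`'s threshold to `⊤` changes the best response only in coordinate `i`, where it
becomes `false`. Along the monotone iteration from `0`, coordinate `i` is `false` at every step as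
soon as it is `false` at step `n`, so the iterates for `u[i:=x]` and for `u[i:=⊤]` coincide. Hence
`e_u^i(x) = e_u^i(⊤)` whenever `(e_u^i(x))_i = 0`.
-/

open Function

/-- Best-response map: `G_u(y) i = 𝟙(g(y)_i ≥ u_i)`, comparisons in the extended reals. -/
noncomputable def Gmap {n : ℕ} (g : (Fin n → Bool) → Fin n → ℝ) (u : Fin n → EReal)
    (y : Fin n → Bool) : Fin n → Bool :=
  fun i => decide (u i ≤ ((g y i : ℝ) : EReal))

/-- Minimal equilibrium: `E(u) = (G_u)^[n](0)`. -/
noncomputable def Emin {n : ℕ} (g : (Fin n → Bool) → Fin n → ℝ) (u : Fin n → EReal) : Fin n → Bool :=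
  (Gmap g u)^[n] (fun _ => false)

theorem Function.iterate_eq_of_forall_lt {α : Type*} {f f' : α → α} {x : α} {k : ℕ}
    (h : ∀ m < k, f (f^[m] x) = f' (f^[m] x)) : f^[k] x = f'^[k] x := by
  induction k with
  | zero => rfl
  | succ k ih =>
    rw [iterate_succ_apply', iterate_succ_apply', ← ih fun m hm => h m (hm.trans k.lt_succ_self),
      h k k.lt_succ_self]

section

variable {n : ℕ} (g : (Fin n → Bool) → Fin n → ℝ)

theorem Gmap_monotone (hg : Monotone g) (u : Fin n → EReal) : Monotone (Gmap g u) :=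
  fun _ _ hy j => Bool.le_iff_imp.mpr fun h => decide_eq_true <|
    (of_decide_eq_true h).trans (EReal.coe_le_coe_iff.mpr (hg hy j))

theorem monotone_iterate_Gmap (hg : Monotone g) (u : Fin n → EReal) :
    Monotone fun k => (Gmap g u)^[k] (fun _ => false) :=
  (Gmap_monotone g hg u).monotone_iterate_of_le_map fun _ => Bool.false_le _

theorem Gmap_update_eq_update_top {u : Fin n → EReal} {i : Fin n} {x : EReal}
    {y : Fin n → Bool} (h : Gmap g (update u i x) y i = false) :
    Gmap g (update u i x) y = Gmap g (update u i ⊤) y := by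
  funext j
  rcases eq_or_ne j i with rfl | hj
  · simpa [Gmap] using h
  · simp only [Gmap, update_of_ne hj]

theorem Emin_update_eq_update_top (hg : Monotone g) {u : Fin n → EReal} {i : Fin n} {x : EReal}
    (h : Emin g (update u i x) i = false) :
    Emin g (update u i x) = Emin g (update u i ⊤) := by
  refine iterate_eq_of_forall_lt fun m hm => Gmap_update_eq_update_top g ?_
  rw [← iterate_succ_apply' (Gmap g _)]
  exact Bool.eq_false_of_le_false <| (monotone_iterate_Gmap g hg _ hm i).trans_eq h

end

/-- `e_u^i` is constant on the region where its `i`-th coordinate is `0`. -/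
theorem Emin_update_constant_on_zero_region {n : ℕ} (g : (Fin n → Bool) → Fin n → ℝ)
    (hg : Monotone g) (u : Fin n → EReal) (i : Fin n) (x' x'' : EReal)
    (h' : Emin g (Function.update u i x') i = false)
    (h'' : Emin g (Function.update u i x'') i = false) :
    Emin g (Function.update u i x') = Emin g (Function.update u i x'') := by
  rw [Emin_update_eq_update_top g hg h', Emin_update_eq_update_top g hg h'']
end

section
/- Let g : {0,1}^n → ℝ^n be monotone increasing and u ∈ ℝ̄^n. Define the threshold t = g(e_u^i(+∞))_i, where e_u^i(x) = E(u[i:=x]). Then for all x ≤ t we have (e_u^i(x))_i = 1, and for all x > t we have (e_u^i(x))_i = 0 and moreover e_u^i(x) = e_u^i(+∞). -/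
/-!
Raising `u i` can only switch best responses off, so `e_u^i(x) ≥ e_u^i(+∞)` for every `x`;
by monotonicity of `g`, player `i`'s payoff at `e_u^i(x)` is then at least `t`, which forces
action `i` whenever `x ≤ t`. If `x > t`, the profile `e_u^i(+∞)`, in which `i` is never
played, is still a fixed point of `G_{u[i:=x]}`, so the minimal fixed point lies below it and
therefore equals it.
-/

open Function

section LeastFixedPoint

variable {α : Type*} [PartialOrder α] [OrderBot α] {f : α → α}

/-- Every non-stationary step of the Kleene chain `⊥ ≤ f ⊥ ≤ f² ⊥ ≤ ⋯` raises the rank `r`. -/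
theorem Monotone.isFixedPt_iterate_bot_of_rank_le (hf : Monotone f) {r : α → ℕ}
    (hr : StrictMono r) {N : ℕ} (hN : ∀ a, r a ≤ N) : IsFixedPt f (f^[N] ⊥) := by
  have hchain : Monotone fun k => f^[k] ⊥ := hf.monotone_iterate_of_le_map bot_le
  have hstep : ∀ k, ¬IsFixedPt f (f^[k] ⊥) → r (f^[k] ⊥) < r (f^[k + 1] ⊥) := fun k hk =>
    hr <| lt_of_le_of_ne (hchain k.le_succ) <| by
      rw [iterate_succ_apply']; exact Ne.symm hk
  have hrank : ∀ k, IsFixedPt f (f^[k] ⊥) ∨ k ≤ r (f^[k] ⊥) := by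
    intro k
    induction k with
    | zero => exact Or.inr (Nat.zero_le _)
    | succ k ih =>
      by_cases hk : IsFixedPt f (f^[k] ⊥)
      · left
        rw [iterate_succ_apply']
        exact hk.apply
      · exact Or.inr <| (ih.resolve_left hk).trans_lt (hstep k hk)
  by_contra hN'
  have := (hrank N).resolve_left hN'
  exact absurd (hN _) (this.trans_lt (hstep N hN')).not_ge

theorem iterate_bot_le_of_isFixedPt (hf : Monotone f) {p : α} (hp : IsFixedPt f p) (k : ℕ) :
    f^[k] ⊥ ≤ p :=
  (hf.iterate k bot_le).trans_eq (hp.iterate k)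

end LeastFixedPoint

theorem strictMono_sum_toNat (ι : Type*) [Fintype ι] :
    StrictMono fun y : ι → Bool => ∑ i, (y i).toNat := by
  intro y y' h
  obtain ⟨hle, j, hj⟩ := Pi.lt_def.mp h
  refine Finset.sum_lt_sum (fun i _ => Bool.toNat_le_toNat (hle i)) ⟨j, Finset.mem_univ _, ?_⟩
  revert hj; cases y j <;> cases y' j <;> decide

theorem sum_toNat_le_card {ι : Type*} [Fintype ι] (y : ι → Bool) :
    ∑ i, (y i).toNat ≤ Fintype.card ι := by
  simpa using Finset.sum_le_sum fun i (_ : i ∈ Finset.univ) => Bool.toNat_le (y i)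

namespace Gmap

variable {n : ℕ} {g : (Fin n → Bool) → Fin n → ℝ}

theorem monotone (hg : Monotone g) (u : Fin n → EReal) : Monotone (Gmap g u) := by
  intro y y' h i
  simp only [Gmap]
  by_cases hc : u i ≤ ((g y i : ℝ) : EReal)
  · simp [hc, hc.trans (EReal.coe_le_coe_iff.mpr (hg h i))]
  · simp [hc]

theorem antitone_left (y : Fin n → Bool) : Antitone fun u => Gmap g u y := by
  intro u u' h i
  simp only [Gmap]
  by_cases hc : u' i ≤ ((g y i : ℝ) : EReal)
  · simp [hc, (h i).trans hc]
  · simp [hc]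

theorem apply_of_eq_top {u : Fin n → EReal} {i : Fin n} (hu : u i = ⊤) (y : Fin n → Bool) :
    Gmap g u y i = false := by
  simp [Gmap, hu]

theorem update_apply_of_ne (u : Fin n → EReal) {i j : Fin n} (hj : j ≠ i) (x x' : EReal)
    (y : Fin n → Bool) : Gmap g (update u i x) y j = Gmap g (update u i x') y j := by
  simp only [Gmap, update_of_ne hj]

end Gmap

namespace Emin

variable {n : ℕ} {g : (Fin n → Bool) → Fin n → ℝ}

theorem isFixedPt (hg : Monotone g) (u : Fin n → EReal) : IsFixedPt (Gmap g u) (Emin g u) := by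
  have := (Gmap.monotone hg u).isFixedPt_iterate_bot_of_rank_le (strictMono_sum_toNat (Fin n))
    sum_toNat_le_card
  rwa [Fintype.card_fin] at this

theorem le_of_isFixedPt (hg : Monotone g) (u : Fin n → EReal) {p : Fin n → Bool}
    (hp : IsFixedPt (Gmap g u) p) : Emin g u ≤ p :=
  iterate_bot_le_of_isFixedPt (Gmap.monotone hg u) hp n

theorem antitone (hg : Monotone g) : Antitone (Emin g) := fun _ _ h =>
  (Gmap.monotone hg _).iterate_le_of_le (fun y => Gmap.antitone_left y h) n _

theorem apply_of_eq_top (hg : Monotone g) {u : Fin n → EReal} {i : Fin n} (hu : u i = ⊤) :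
    Emin g u i = false := by
  rw [← isFixedPt hg u]
  exact Gmap.apply_of_eq_top hu _

end Emin

/-- The threshold of `e_u^i` is `t = g(e_u^i(+∞))_i`: below `t` the `i`-th coordinate of
the minimal equilibrium is `1`; strictly above `t` it is `0` and the minimal equilibrium
coincides with `e_u^i(+∞)`. -/
theorem threshold_formula {n : ℕ} (g : (Fin n → Bool) → Fin n → ℝ) (hg : Monotone g)
    (u : Fin n → EReal) (i : Fin n) :
    (∀ x : EReal, x ≤ ((g (Emin g (Function.update u i ⊤)) i : ℝ) : EReal) →
        Emin g (Function.update u i x) i = true) ∧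
    (∀ x : EReal, ((g (Emin g (Function.update u i ⊤)) i : ℝ) : EReal) < x →
        Emin g (Function.update u i x) i = false ∧
        Emin g (Function.update u i x) = Emin g (Function.update u i ⊤)) := by
  set etop := Emin g (update u i ⊤)
  have htop_le (x : EReal) : etop ≤ Emin g (update u i x) :=
    Emin.antitone hg (update_mono le_top)
  have htop_apply : etop i = false := Emin.apply_of_eq_top hg (update_self _ _ _)
  refine ⟨fun x hx => ?_, fun x hx => ?_⟩
  · have hgx : x ≤ ((g (Emin g (update u i x)) i : ℝ) : EReal) :=
      hx.trans (EReal.coe_le_coe_iff.mpr (hg (htop_le x) i))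
    rw [← Emin.isFixedPt hg]
    simpa [Gmap] using hgx
  · have hfix : IsFixedPt (Gmap g (update u i x)) etop := by
      funext j
      rcases eq_or_ne j i with rfl | hj
      · rw [htop_apply]
        simpa [Gmap] using hx
      · rw [Gmap.update_apply_of_ne u hj x ⊤]
        exact congrFun (Emin.isFixedPt hg _) j
    have heq : Emin g (update u i x) = etop :=
      (Emin.le_of_isFixedPt hg _ hfix).antisymm (htop_le x)
    exact ⟨heq ▸ htop_apply, heq⟩
end
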